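/- arXiv:2508.11365 — 5 statements merged into one kernel-verified Lean document; each statement's English description precedes it below -/
import Mathlib

section
/- Let F be a nonempty feasible set and y a cost vector with unique minimizer w*(y) over F. If the SPO+ subgradient ∇_SPO+ = 2(w*(y) - w*(2ŷ - y)) is zero, i.e., w*(2ŷ - y) = w*(y), then ŷᵀw' - ŷᵀw*(y) ≥ (1/2)·yᵀ(w' - w*(y)) for all w' ∈ F; in particular w*(y) is an optimal solution to min_{w∈F} ŷᵀw. -/
/-- If the SPO+ subgradient `2(w*(y) - w*(2yh - y))` vanishes
(i.e. `w*(2yh-y) = w*(y)`, `w*(y)` the unique minimizer of `yᵀw` over `F`),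
then `yhᵀw' - yhᵀw*(y) ≥ (1/2) yᵀ(w' - w*(y))` for all `w' ∈ F`; in particular
`w*(y)` is optimal for `min_{w ∈ F} yhᵀw`. -/
theorem spoplus_zero_subgradient_implies_optimal {K : ℕ}
    (F : Set (Fin K → ℝ)) (hF : F.Nonempty)
    (y yh wy wt : Fin K → ℝ)
    (hwyF : wy ∈ F)
    (hwyOpt : ∀ w ∈ F, (∑ i, y i * wy i) ≤ ∑ i, y i * w i)
    (hwyUniq : ∀ w ∈ F, (∀ w' ∈ F, (∑ i, y i * w i) ≤ ∑ i, y i * w' i) → w = wy)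
    (hwtF : wt ∈ F)
    (hwtOpt : ∀ w ∈ F, (∑ i, (2 * yh i - y i) * wt i) ≤ ∑ i, (2 * yh i - y i) * w i)
    (hzero : (2 : ℝ) • (wy - wt) = 0) :
    (∀ w' ∈ F, (∑ i, yh i * w' i) - (∑ i, yh i * wy i)
        ≥ (1/2) * ∑ i, y i * (w' i - wy i)) ∧
    (∀ w' ∈ F, (∑ i, yh i * wy i) ≤ ∑ i, yh i * w' i) := by
  have heq : wt = wy := by
    funext i
    have := congrFun hzero i
    simp [Pi.smul_apply, Pi.sub_apply] at this
    linarith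
  subst heq
  have key : ∀ w' ∈ F, (∑ i, yh i * w' i) - (∑ i, yh i * wt i)
      ≥ (1/2) * ∑ i, y i * (w' i - wt i) := by
    intro w' hw'
    have h := hwtOpt w' hw'
    have e1 : (∑ i, (2 * yh i - y i) * wt i)
        = 2 * (∑ i, yh i * wt i) - ∑ i, y i * wt i := by
      rw [Finset.mul_sum, ← Finset.sum_sub_distrib]; apply Finset.sum_congr rfl
      intro i _; ring
    have e2 : (∑ i, (2 * yh i - y i) * w' i)
        = 2 * (∑ i, yh i * w' i) - ∑ i, y i * w' i := by
      rw [Finset.mul_sum, ← Finset.sum_sub_distrib]; apply Finset.sum_congr rfl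
      intro i _; ring
    have e3 : (∑ i, y i * (w' i - wt i)) = (∑ i, y i * w' i) - ∑ i, y i * wt i := by
      rw [← Finset.sum_sub_distrib]; apply Finset.sum_congr rfl
      intro i _; ring
    rw [e1, e2] at h
    rw [e3]; linarith
  refine ⟨key, fun w' hw' => ?_⟩
  have h1 := key w' hw'
  have h2 := hwyOpt w' hw'
  have e3 : (∑ i, y i * (w' i - wt i)) = (∑ i, y i * w' i) - ∑ i, y i * wt i := by
    rw [← Finset.sum_sub_distrib]; apply Finset.sum_congr rfl
    intro i _; ring
  rw [e3] at h1
  linarith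
end

section
/- Suppose ŷ₁, ŷ₂ ∈ R^K and w̃ ∈ F satisfy ŷ₁ᵀw̃ - ŷ₁ᵀw*(y) ≥ (1/2)yᵀ(w̃ - w*(y)) and 0 ≤ ŷ₂ᵀw̃ - ŷ₂ᵀw*(y) < (1/2)yᵀ(w̃ - w*(y)). Then for every perturbation Δ ∈ R^K, if (ŷ₁+Δ)ᵀw*(y) > (ŷ₁+Δ)ᵀw̃ then (ŷ₂+Δ)ᵀw*(y) > (ŷ₂+Δ)ᵀw̃. -/
/-- if `yh1` satisfies the SPO+ margin condition at `w̃` and `yh2` only the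
weaker SCE condition, then any perturbation `Δ` breaking optimality for `yh1`
also breaks it for `yh2`. -/
theorem perturbation_transfer {K : ℕ}
    (F : Set (Fin K → ℝ)) (y wy wt yh1 yh2 : Fin K → ℝ)
    (hwyF : wy ∈ F) (hwtF : wt ∈ F)
    (h1 : (∑ i, yh1 i * wt i) - (∑ i, yh1 i * wy i)
        ≥ (1/2) * ∑ i, y i * (wt i - wy i))
    (h2a : 0 ≤ (∑ i, yh2 i * wt i) - (∑ i, yh2 i * wy i))
    (h2b : (∑ i, yh2 i * wt i) - (∑ i, yh2 i * wy i)
        < (1/2) * ∑ i, y i * (wt i - wy i)) :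
    ∀ Δ : Fin K → ℝ,
      ((∑ i, (yh1 i + Δ i) * wy i) > ∑ i, (yh1 i + Δ i) * wt i) →
      ((∑ i, (yh2 i + Δ i) * wy i) > ∑ i, (yh2 i + Δ i) * wt i) := by
  intro Δ h
  simp only [add_mul, Finset.sum_add_distrib] at h ⊢
  linarith [h1, h2b, h]
end

section
/- If argmin_{w∈F} yᵀw = {w*(y)} is a singleton, then L_SCE(w*(ŷ), y) = 0 if and only if Regret(w*(ŷ), y) = yᵀw*(ŷ) - yᵀw*(y) = 0. -/
/-- under the singleton-argmin assumption, the SCE loss is zero iff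
the regret is zero. -/
theorem sce_zero_iff_regret_zero {K : ℕ}
    (F : Set (Fin K → ℝ)) (hF : F.Nonempty)
    (y yh wy wyh : Fin K → ℝ)
    (hwyF : wy ∈ F)
    (hwyOpt : ∀ w ∈ F, (∑ i, y i * wy i) ≤ ∑ i, y i * w i)
    (hwyUniq : ∀ w ∈ F, (∀ w' ∈ F, (∑ i, y i * w i) ≤ ∑ i, y i * w' i) → w = wy)
    (hwyhF : wyh ∈ F)
    (hwyhOpt : ∀ w ∈ F, (∑ i, yh i * wyh i) ≤ ∑ i, yh i * w i) :
    ((∑ i, (yh i - y i) * wy i) - (∑ i, (yh i - y i) * wyh i) = 0) ↔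
    ((∑ i, y i * wyh i) - (∑ i, y i * wy i) = 0) := by
  have hA : (∑ i, yh i * wyh i) ≤ ∑ i, yh i * wy i := hwyhOpt wy hwyF
  have hB : (∑ i, y i * wy i) ≤ ∑ i, y i * wyh i := hwyOpt wyh hwyhF
  have hexp : (∑ i, (yh i - y i) * wy i) - (∑ i, (yh i - y i) * wyh i)
      = ((∑ i, yh i * wy i) - (∑ i, yh i * wyh i))
        + ((∑ i, y i * wyh i) - (∑ i, y i * wy i)) := by
    simp [sub_mul, Finset.sum_sub_distrib]; ring
  constructor
  · intro h; rw [hexp] at h; linarith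
  · intro h
    have heq : wyh = wy := by
      apply hwyUniq wyh hwyhF
      intro w' hw'
      have := hwyOpt w' hw'
      linarith
    subst heq
    simp
end

section
/- For the quadratically regularized Top-1 selection problem max_w yᵀw - (μ/2)‖w‖² subject to Σᵢ wᵢ ≤ 1 and w ≥ 0, with y having a strictly largest entry y⁽¹⁾: if y⁽¹⁾ - y⁽ᵏ⁾ > μ for some coordinate k, then at the optimal solution the k-th coordinate satisfies w⁽ᵏ⁾ = 0. -/
/-- in the quadratically regularized Top-1 selection problem
`max yᵀw - (μ/2)‖w‖²` over `{w : ∑ i w i ≤ 1, w ≥ 0}`, if the strictly largest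
entry `y j` satisfies `y j - y k > μ`, then the optimal solution has `w k = 0`. -/
theorem top1_regularized_zero_coordinate {M : ℕ}
    (y : Fin M → ℝ) (μ : ℝ) (hμ : 0 < μ)
    (hypos : ∀ i, 0 < y i)
    (j : Fin M) (hjmax : ∀ i, i ≠ j → y i < y j)
    (w : Fin M → ℝ)
    (hwFeas : (∑ i, w i) ≤ 1 ∧ ∀ i, 0 ≤ w i)
    (hwOpt : ∀ w' : Fin M → ℝ, ((∑ i, w' i) ≤ 1 ∧ ∀ i, 0 ≤ w' i) →
      (∑ i, y i * w' i) - μ / 2 * (∑ i, (w' i) ^ 2)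
        ≤ (∑ i, y i * w i) - μ / 2 * (∑ i, (w i) ^ 2))
    (k : Fin M) (hk : y j - y k > μ) :
    w k = 0 := by
  by_contra hne
  have ht : 0 < w k := lt_of_le_of_ne (hwFeas.2 k) (Ne.symm hne)
  have hkj : k ≠ j := by
    rintro rfl
    simp at hk
    linarith
  set t := w k with htdef
  set w' : Fin M → ℝ := fun i =>
    w i + t * ((if i = j then 1 else 0) - (if i = k then 1 else 0)) with hw'
  have hsum : ∑ i, w' i = ∑ i, w i := by
    simp [hw', Finset.sum_add_distrib, mul_sub, mul_ite, mul_one, mul_zero,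
      Finset.sum_sub_distrib, Finset.sum_ite_eq']
  have hnn : ∀ i, 0 ≤ w' i := by
    intro i
    by_cases hij : i = j
    · subst hij
      simp [hw', if_neg (Ne.symm hkj)]
      have := hwFeas.2 i
      linarith
    · by_cases hik : i = k
      · subst hik
        simp [hw', if_neg hij]
        exact le_of_eq htdef
      · simp [hw', if_neg hij, if_neg hik]
        exact hwFeas.2 i
  have hlin : ∑ i, y i * w' i = (∑ i, y i * w i) + t * (y j - y k) := by
    have : ∀ i, y i * w' i = y i * w i + (t * y i) * (if i = j then 1 else 0)
        - (t * y i) * (if i = k then 1 else 0) := by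
      intro i; simp only [hw']; ring
    rw [Finset.sum_congr rfl fun i _ => this i]
    simp [Finset.sum_add_distrib, Finset.sum_sub_distrib, mul_ite, mul_one, mul_zero,
      Finset.sum_ite_eq']
    ring
  have hsq : ∑ i, (w' i) ^ 2 = (∑ i, (w i) ^ 2) + 2 * t * w j := by
    have : ∀ i, (w' i) ^ 2 = (w i) ^ 2
        + (2 * w i * t + t ^ 2) * (if i = j then 1 else 0)
        + (t ^ 2 - 2 * w i * t) * (if i = k then 1 else 0) := by
      intro i; simp only [hw']
      by_cases hij : i = j
      · subst hij
        simp only [eq_self_iff_true, if_true, if_neg (Ne.symm hkj)]; ring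
      · by_cases hik : i = k
        · subst hik
          simp only [eq_self_iff_true, if_true, if_neg hij]; ring
        · simp only [if_neg hij, if_neg hik]; ring
    rw [Finset.sum_congr rfl fun i _ => this i]
    simp [Finset.sum_add_distrib, mul_ite, mul_one, mul_zero, Finset.sum_ite_eq']
    ring
  have hopt := hwOpt w' ⟨hsum ▸ hwFeas.1, hnn⟩
  rw [hlin, hsq] at hopt
  have hkey : t * (y j - y k) ≤ μ * t * w j := by nlinarith [hopt]
  have hwj1 : w j ≤ 1 := by
    have := Finset.single_le_sum (f := w) (fun i _ => hwFeas.2 i) (Finset.mem_univ j)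
    linarith [hwFeas.1]
  have h1 : t * μ < t * (y j - y k) := by
    exact (mul_lt_mul_iff_right₀ ht).mpr hk
  have h2 : μ * t * w j ≤ μ * t * 1 :=
    mul_le_mul_of_nonneg_left hwj1 (mul_pos hμ ht).le
  nlinarith [h1, h2, hkey]
end

section
/- The SPO+ loss is an upper bound on regret: for all y, ŷ ∈ R^K, Regret(w*(ŷ), y) = yᵀw*(ŷ) - yᵀw*(y) ≤ SPO+(ŷ, y), where SPO+(ŷ, y) = max_{w'∈F}{(y - 2ŷ)ᵀw'} + 2ŷᵀw*(y) - yᵀw*(y). -/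
/-- the SPO+ loss upper-bounds regret:
`yᵀw*(yh) - yᵀw*(y) ≤ (2yh - y)ᵀw*(y) - min_{w'∈F}(2yh - y)ᵀw'`. -/
theorem spoplus_upper_bounds_regret {K : ℕ}
    (F : Set (Fin K → ℝ)) (hF : F.Nonempty)
    (y yh wy wyh wm : Fin K → ℝ)
    (hwyF : wy ∈ F)
    (hwyOpt : ∀ w ∈ F, (∑ i, y i * wy i) ≤ ∑ i, y i * w i)
    (hwyhF : wyh ∈ F)
    (hwyhOpt : ∀ w ∈ F, (∑ i, yh i * wyh i) ≤ ∑ i, yh i * w i)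
    (hwmF : wm ∈ F)
    (hwmOpt : ∀ w ∈ F, (∑ i, (2 * yh i - y i) * wm i) ≤ ∑ i, (2 * yh i - y i) * w i) :
    (∑ i, y i * wyh i) - (∑ i, y i * wy i)
      ≤ (∑ i, (2 * yh i - y i) * wy i) - ∑ i, (2 * yh i - y i) * wm i := by
  have e : ∀ w : Fin K → ℝ, ∑ i, (2 * yh i - y i) * w i
      = 2 * (∑ i, yh i * w i) - ∑ i, y i * w i := by
    intro w
    rw [Finset.mul_sum, ← Finset.sum_sub_distrib]
    exact Finset.sum_congr rfl fun i _ => by ring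
  have h1 := hwmOpt wyh hwyhF
  have h2 := hwyhOpt wy hwyF
  rw [e wyh] at h1
  rw [e wy]
  linarith
end
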